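/- Let g be a Lorentzian 3×3 real symmetric matrix, g8 a positive-definite 8×8 real symmetric matrix, c ∈ ℝ with c² > |g|, A ≠ 0, and set D := A²·(c² − |g|) (which is positive). Then U_B(A)ᵀ · M_C(g, g8, c) · U_B(A) = M_C( D^(−2/3)·g, D^(1/3)·g8, −c/D ). These are the timelike Buscher rules, valid exactly when the dualised background can still be described by a metric and 3-form. -/

import Mathlib

open Matrix

/-- The (g,C)-frame generalised metric: a 14×14 matrix in 3+3+8 block form. -/
noncomputable def MC (g : Matrix (Fin 3) (Fin 3) ℝ) (g8 : Matrix (Fin 8) (Fin 8) ℝ) (c : ℝ) :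
    Matrix ((Fin 3 ⊕ Fin 3) ⊕ Fin 8) ((Fin 3 ⊕ Fin 3) ⊕ Fin 8) ℝ :=
  |g.det * g8.det| ^ (-(1 : ℝ) / 2) •
    fromBlocks
      (fromBlocks ((1 + c ^ 2 / g.det) • g) ((c / g.det) • g) ((c / g.det) • g)
        ((1 / g.det) • g))
      0 0 g8

/-- The Buscher duality matrix: [[0, A·1], [−(1/A)·1, 0]] on the first 6 coordinates,
identity on the 8 transverse coordinates. -/
noncomputable def UB (A : ℝ) : Matrix ((Fin 3 ⊕ Fin 3) ⊕ Fin 8) ((Fin 3 ⊕ Fin 3) ⊕ Fin 8) ℝ :=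
  fromBlocks (fromBlocks 0 (A • 1) ((-(1 / A)) • 1) 0) 0 0 1

/-- A 3×3 real symmetric (Hermitian) matrix is Lorentzian if it has exactly one negative
and two positive eigenvalues. -/
def Lorentzian3 (g : Matrix (Fin 3) (Fin 3) ℝ) : Prop :=
  ∃ hg : g.IsHermitian,
    {i | hg.eigenvalues i < 0}.ncard = 1 ∧ {i | 0 < hg.eigenvalues i}.ncard = 2

/-! The Buscher matrix swaps the spacetime and dual blocks, so the conjugated 6×6 block is again
of the form `[[a • g, b • g], [b • g, e • g]]`, now with `b = -c / det g`. With `t = D^(1/3)`,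
the rescaling `g ↦ t⁻² • g`, `g8 ↦ t • g8` multiplies `det g · det g8` by `t²`, hence the
prefactor by `t⁻¹`, and for `C = -c / t³` it produces the same off-diagonal coefficient; the
diagonal coefficients then agree because `t³ = D = A² (c² + det g)`. -/

lemma prod_neg_of_unique_neg {ι : Type*} [Fintype ι] {f : ι → ℝ} {a : ι} (ha : f a < 0)
    (hpos : ∀ i ≠ a, 0 < f i) : ∏ i, f i < 0 := by
  classical
  rw [← Finset.mul_prod_erase _ _ (Finset.mem_univ a)]
  exact mul_neg_of_neg_of_pos ha (Finset.prod_pos fun i hi ↦ hpos i (Finset.ne_of_mem_erase hi))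

lemma Lorentzian3.det_neg {g : Matrix (Fin 3) (Fin 3) ℝ} (hg : Lorentzian3 g) : g.det < 0 := by
  obtain ⟨hgh, hneg, hpos⟩ := hg
  obtain ⟨a, ha⟩ := Set.ncard_eq_one.mp hneg
  have ha_neg : hgh.eigenvalues a < 0 :=
    (ha ▸ Set.mem_singleton a : a ∈ {i | hgh.eigenvalues i < 0})
  have hpos_eq : {i | 0 < hgh.eigenvalues i} = {a}ᶜ := by
    refine Set.eq_of_subset_of_ncard_le (fun i hi (hia : i = a) ↦ ?_) ?_
    · exact lt_asymm (hia ▸ ha_neg) hi.out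
    · rw [hpos, Set.ncard_compl, Set.ncard_singleton, Nat.card_fin]
  rw [hgh.det_eq_prod_eigenvalues]
  exact_mod_cast prod_neg_of_unique_neg ha_neg fun i hi ↦
    (show i ∈ {i | 0 < hgh.eigenvalues i} from hpos_eq ▸ hi)

lemma UB_transpose_mul_MC_mul_UB (g : Matrix (Fin 3) (Fin 3) ℝ) (g8 : Matrix (Fin 8) (Fin 8) ℝ)
    (c : ℝ) {A : ℝ} (hA : A ≠ 0) :
    (UB A)ᵀ * MC g g8 c * UB A = |g.det * g8.det| ^ (-(1 : ℝ) / 2) •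
      fromBlocks
        (fromBlocks ((1 / (A ^ 2 * g.det)) • g) ((-c / g.det) • g) ((-c / g.det) • g)
          ((A ^ 2 * (1 + c ^ 2 / g.det)) • g))
        0 0 g8 := by
  simp only [MC, UB, fromBlocks_transpose, transpose_zero, transpose_one, transpose_smul,
    Matrix.mul_smul, Matrix.smul_mul, fromBlocks_multiply, Matrix.zero_mul, Matrix.mul_zero,
    Matrix.one_mul, Matrix.mul_one, add_zero, zero_add, smul_smul, smul_zero]
  congr 3 <;> field_simp

lemma MC_inv_sq_smul_smul (g : Matrix (Fin 3) (Fin 3) ℝ) (g8 : Matrix (Fin 8) (Fin 8) ℝ)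
    (c : ℝ) {t : ℝ} (ht : 0 < t) :
    MC ((t ^ 2)⁻¹ • g) (t • g8) (-c / t ^ 3) = |g.det * g8.det| ^ (-(1 : ℝ) / 2) •
      fromBlocks
        (fromBlocks (((1 + c ^ 2 / g.det) / t ^ 3) • g) ((-c / g.det) • g) ((-c / g.det) • g)
          ((t ^ 3 / g.det) • g))
        0 0 g8 := by
  have hprefactor : |((t ^ 2)⁻¹ • g).det * (t • g8).det| ^ (-(1 : ℝ) / 2)
      = t⁻¹ * |g.det * g8.det| ^ (-(1 : ℝ) / 2) := by
    rw [det_smul, det_smul, Fintype.card_fin, Fintype.card_fin,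
      show (t ^ 2)⁻¹ ^ 3 * g.det * (t ^ 8 * g8.det) = t ^ 2 * (g.det * g8.det) by
        field_simp,
      abs_mul, Real.mul_rpow (by positivity) (abs_nonneg _), abs_of_pos (by positivity),
      ← Real.rpow_natCast, ← Real.rpow_mul ht.le]
    norm_num [Real.rpow_neg_one]
  rw [MC, hprefactor, mul_comm, mul_smul]
  congr 1
  simp only [fromBlocks_smul, smul_zero, smul_smul, det_smul, Fintype.card_fin,
    inv_mul_cancel₀ ht.ne', one_smul]
  congr 3 <;> field_simp

theorem stmt_15_general (g : Matrix (Fin 3) (Fin 3) ℝ) (g8 : Matrix (Fin 8) (Fin 8) ℝ)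
    (hg : Lorentzian3 g) (c A : ℝ)
    (hc : -g.det < c ^ 2) (hA : A ≠ 0) :
    (UB A)ᵀ * MC g g8 c * UB A =
      MC ((A ^ 2 * (c ^ 2 - (-g.det))) ^ (-(2 : ℝ) / 3) • g)
        ((A ^ 2 * (c ^ 2 - (-g.det))) ^ ((1 : ℝ) / 3) • g8)
        (-c / (A ^ 2 * (c ^ 2 - (-g.det)))) := by
  have hdet : g.det ≠ 0 := hg.det_neg.ne
  set D := A ^ 2 * (c ^ 2 - -g.det) with hD_def
  have hD : 0 < D := mul_pos (by positivity) (by linarith)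
  set t := D ^ ((1 : ℝ) / 3)
  have ht : 0 < t := Real.rpow_pos_of_pos hD _
  have ht_cube : t ^ 3 = D := by
    rw [← Real.rpow_natCast, ← Real.rpow_mul hD.le]; norm_num
  have hD_pow : D ^ (-(2 : ℝ) / 3) = (t ^ 2)⁻¹ := by
    rw [← Real.rpow_natCast, ← Real.rpow_mul hD.le, ← Real.rpow_neg hD.le]; norm_num
  rw [hD_pow, ← ht_cube, MC_inv_sq_smul_smul g g8 c ht, UB_transpose_mul_MC_mul_UB g g8 c hA,
    ht_cube]
  congr 4 <;> field_simp <;> rw [hD_def] <;> ring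

/-- Timelike Buscher rules: for Lorentzian g, positive-definite g8, c² > |g| (|g| = −det g),
A ≠ 0 and D := A²·(c² − |g|),
U_B(A)ᵀ·M_C(g,g8,c)·U_B(A) = M_C(D^(−2/3)·g, D^(1/3)·g8, −c/D). -/
theorem stmt_15 (g : Matrix (Fin 3) (Fin 3) ℝ) (g8 : Matrix (Fin 8) (Fin 8) ℝ)
    (hg : Lorentzian3 g) (hg8 : g8.PosDef) (c A : ℝ)
    (hc : -g.det < c ^ 2) (hA : A ≠ 0) :
    (UB A)ᵀ * MC g g8 c * UB A =
      MC ((A ^ 2 * (c ^ 2 - (-g.det))) ^ (-(2 : ℝ) / 3) • g)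
        ((A ^ 2 * (c ^ 2 - (-g.det))) ^ ((1 : ℝ) / 3) • g8)
        (-c / (A ^ 2 * (c ^ 2 - (-g.det)))) :=
  stmt_15_general g g8 hg c A hc hA
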